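/- arXiv:2206.08507 — 2 statements merged into one kernel-verified Lean document; each statement's English description precedes it below -/
import Mathlib

section
/- Let s = a + ib ∈ ℂ with a > 0 and b ∈ ℝ, let d ≥ 0 be a real number, and set S = 1 + d/s. Then Re( conj(sS)/S ) = a + k, where k = 2 d b² / |sS|² ≥ 0. (Note that sS = s + d, so |sS|² = (a+d)² + b².) -/
/-!
Put `w = s S = s + d`. Then `conj (s S) / S = s conj w / w = s (conj w)² / |w|²`, and because
`w - s = d` is real, `Re (s (conj w)²) = Re s · |w|² + 2 d (Im s)²`.
-/

open ComplexConjugate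

namespace Complex

theorem mul_conj_div_eq_mul_conj_sq_div_normSq (z w : ℂ) :
    z * conj w / w = z * conj w ^ 2 / (normSq w : ℂ) := by
  rw [div_eq_mul_inv, inv_def, ofReal_inv]; ring

theorem re_mul_conj_add_ofReal_sq (s : ℂ) (d : ℝ) :
    (s * conj (s + d) ^ 2).re = s.re * normSq (s + d) + 2 * d * s.im ^ 2 := by
  simp only [normSq_apply, mul_re, mul_im, pow_two, conj_re, conj_im, add_re, add_im, ofReal_re,
    ofReal_im, add_zero]
  ring

theorem re_mul_conj_div_add_ofReal (s : ℂ) (d : ℝ) (hw : s + d ≠ 0) :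
    (s * conj (s + d) / (s + d)).re = s.re + 2 * d * s.im ^ 2 / ‖s + d‖ ^ 2 := by
  have hn : normSq (s + d) ≠ 0 := normSq_eq_zero.not.mpr hw
  rw [mul_conj_div_eq_mul_conj_sq_div_normSq, div_ofReal_re, re_mul_conj_add_ofReal_sq,
    ← normSq_eq_norm_sq, add_div, mul_div_cancel_right₀ _ hn]

end Complex

/-- For `s = a + ib` with `a > 0`, `d ≥ 0` and `S = 1 + d/s`, one has
`Re(conj(sS)/S) = a + k` where `k = 2 d b² / |sS|² ≥ 0`. -/
theorem pml_stretching_re_conj_sS_div_S (a b d : ℝ) (ha : 0 < a) (hd : 0 ≤ d)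
    (s S : ℂ) (hs : s = (a : ℂ) + (b : ℂ) * Complex.I) (hS : S = 1 + (d : ℂ) / s) :
    ((starRingEnd ℂ) (s * S) / S).re = a + 2 * d * b ^ 2 / ‖s * S‖ ^ 2 ∧
    0 ≤ 2 * d * b ^ 2 / ‖s * S‖ ^ 2 := by
  have hs_re : s.re = a := by simp [hs]
  have hs_im : s.im = b := by simp [hs]
  have hs0 : s ≠ 0 := ne_of_apply_ne Complex.re (by simp [hs_re, ha.ne'])
  have hw : s + d ≠ 0 := ne_of_apply_ne Complex.re (by simp [hs_re]; linarith)
  have hsS : s * S = s + d := by rw [hS]; field_simp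
  refine ⟨?_, by positivity⟩
  rw [← mul_div_mul_left _ S hs0, hsS, Complex.re_mul_conj_div_add_ofReal s d hw, hs_re, hs_im]
end

section
/- Let s = a + ib ∈ ℂ with a > 0 and b ∈ ℝ, let d ≥ 0 be a real number, and set S = 1 + d/s. Then Re( conj(s) / S² ) = ( a + 2 d b² / ((a+d)² + b²) ) / |S|²; in particular Re( conj(s)/S² ) > 0. -/
/-!
With `S = (s + d) / s` one has `conj s / S² = |s|² · s / (s + d)²`, and multiplying through by
`conj (s + d)²` gives `Re (s / (s + d)²) · |s + d|⁴ = a |s + d|² + 2 d b²`.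
Both summands are nonnegative and the first is positive, since `a > 0` and `d ≥ 0`.
-/

open Complex ComplexConjugate

namespace Complex

variable {s : ℂ} {d : ℝ}

lemma add_ofReal_ne_zero_of_re_pos (hs : 0 < s.re) (hd : 0 ≤ d) : s + d ≠ 0 := by
  intro h
  have := congrArg re h
  simp only [add_re, ofReal_re, zero_re] at this
  linarith

lemma one_add_ofReal_div_eq (hs : s ≠ 0) : 1 + d / s = (s + d) / s := by
  field_simp

lemma normSq_one_add_ofReal_div (hs : s ≠ 0) :
    normSq (1 + d / s) = normSq (s + d) / normSq s := by
  rw [one_add_ofReal_div_eq hs, normSq_div]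

lemma conj_div_sq_one_add_ofReal_div (hs : s ≠ 0) (hsd : s + d ≠ 0) :
    conj s / (1 + d / s) ^ 2 = normSq s * (s / (s + d) ^ 2) := by
  rw [one_add_ofReal_div_eq hs, ← mul_conj]
  field_simp

lemma re_div_sq_add_ofReal (hsd : s + d ≠ 0) :
    (s / (s + d) ^ 2).re = (s.re * normSq (s + d) + 2 * d * s.im ^ 2) / normSq (s + d) ^ 2 := by
  have hconj : conj (s + d) ≠ 0 := (map_ne_zero _).2 hsd
  have : s / (s + d) ^ 2 = s * conj (s + d) ^ 2 / (normSq (s + d) ^ 2 : ℝ) := by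
    rw [ofReal_pow, ← mul_conj]
    field_simp
  rw [this, div_ofReal_re]
  congr 1
  simp only [map_add, conj_ofReal, pow_two, mul_re, mul_im, add_re, add_im, conj_re, conj_im,
    ofReal_re, ofReal_im, normSq_apply]
  ring

lemma re_conj_div_sq_one_add_ofReal_div (hs : s ≠ 0) (hsd : s + d ≠ 0) :
    (conj s / (1 + d / s) ^ 2).re =
      (s.re + 2 * d * s.im ^ 2 / normSq (s + d)) / normSq (1 + d / s) := by
  rw [conj_div_sq_one_add_ofReal_div hs hsd, re_ofReal_mul, re_div_sq_add_ofReal hsd,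
    normSq_one_add_ofReal_div hs]
  have hN : normSq (s + d) ≠ 0 := (normSq_pos.2 hsd).ne'
  field_simp

end Complex

/-- For `s = a + ib` with `a > 0`, `d ≥ 0` and `S = 1 + d/s`,
`Re(conj(s)/S²) = (a + 2 d b²/((a+d)² + b²)) / |S|² > 0`. -/
theorem pml_ellipticity (a b d : ℝ) (ha : 0 < a) (hd : 0 ≤ d)
    (s S : ℂ) (hs : s = (a : ℂ) + (b : ℂ) * Complex.I) (hS : S = 1 + (d : ℂ) / s) :
    ((starRingEnd ℂ) s / S ^ 2).re =
      (a + 2 * d * b ^ 2 / ((a + d) ^ 2 + b ^ 2)) / ‖S‖ ^ 2 ∧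
    0 < ((starRingEnd ℂ) s / S ^ 2).re := by
  have hre : s.re = a := by simp [hs]
  have him : s.im = b := by simp [hs]
  have hs0 : s ≠ 0 := fun h => by simp [h] at hre; linarith
  have hsd : s + d ≠ 0 := add_ofReal_ne_zero_of_re_pos (hre ▸ ha) hd
  have hS0 : S ≠ 0 := by rw [hS, one_add_ofReal_div_eq hs0]; exact div_ne_zero hsd hs0
  have hnormSq : normSq (s + d) = (a + d) ^ 2 + b ^ 2 := by
    simp only [normSq_apply, add_re, add_im, ofReal_re, ofReal_im, hre, him, add_zero]
    ring
  have key : (conj s / S ^ 2).re = (a + 2 * d * b ^ 2 / ((a + d) ^ 2 + b ^ 2)) / ‖S‖ ^ 2 := by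
    rw [hS, Complex.sq_norm, re_conj_div_sq_one_add_ofReal_div hs0 hsd, hre, him, hnormSq]
  exact ⟨key, key ▸ div_pos (by positivity) (by positivity)⟩
end
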